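/- In the setting of the previous problem, if u₁, u₂ ∈ H² ∩ H¹₀ solve ∂²ₓu_i − u_i − N u_i − f(u_i, ∂ₓu_i) = h_i with N > C_f + (C'_f)²/2 + 1/2, then ‖u₁ − u₂‖²_{H¹} ≤ ‖h₁ − h₂‖²_{L²}; in particular the solution operator Υ : h ↦ u is Lipschitz from L² to H¹₀ with constant 1. -/

import Mathlib

open Set Real MeasureTheory

abbrev Vec (m : ℕ) := EuclideanSpace ℝ (Fin m)

/-!
The difference `v = u₁ - u₂` vanishes at both ends and satisfies
`v'' = (1 + N) v + (f(u₁, u₁') - f(u₂, u₂')) + (h₁ - h₂)`, where the bracket is bounded by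
`C_f ‖v‖ + C'_f ‖v'‖` by the mean value inequality in each argument. Testing the equation against
`v` and integrating by parts gives `0 = ∫ ‖v'‖² + ⟪v'', v⟫`, and two applications of Young's
inequality bound this integrand pointwise from below by `(‖v‖² + ‖v'‖² - ‖h₁ - h₂‖²) / 2`.
-/

section PartialDerivatives

variable {E F G : Type*} [NormedAddCommGroup E] [NormedSpace ℝ E]
  [NormedAddCommGroup F] [NormedSpace ℝ F] [NormedAddCommGroup G] [NormedSpace ℝ G]

theorem norm_sub_le_of_norm_fderiv_partial_le {f : E → F → G} {C C' : ℝ}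
    (hf : Differentiable ℝ (Function.uncurry f))
    (hfu : ∀ y z, ‖fderiv ℝ (fun w => f w z) y‖ ≤ C)
    (hfz : ∀ y z, ‖fderiv ℝ (fun w => f y w) z‖ ≤ C') (a c : E) (b d : F) :
    ‖f a b - f c d‖ ≤ C * ‖a - c‖ + C' * ‖b - d‖ := by
  have hfst : ‖f a b - f c b‖ ≤ C * ‖a - c‖ :=
    convex_univ.norm_image_sub_le_of_norm_fderiv_le
      (fun y _ => (hf.comp (differentiable_id.prodMk (differentiable_const b))) y)
      (fun y _ => hfu y b) (mem_univ c) (mem_univ a)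
  have hsnd : ‖f c b - f c d‖ ≤ C' * ‖b - d‖ :=
    convex_univ.norm_image_sub_le_of_norm_fderiv_le
      (fun z _ => (hf.comp ((differentiable_const c).prodMk differentiable_id)) z)
      (fun z _ => hfz c z) (mem_univ d) (mem_univ b)
  calc ‖f a b - f c d‖ ≤ ‖f a b - f c b‖ + ‖f c b - f c d‖ :=
        norm_sub_le_norm_sub_add_norm_sub _ _ _
    _ ≤ C * ‖a - c‖ + C' * ‖b - d‖ := add_le_add hfst hsnd

end PartialDerivatives

section Energy

variable {E : Type*} [NormedAddCommGroup E] [InnerProductSpace ℝ E]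

/-- `∫ ‖v'‖² + ⟪v'', v⟫ = [⟪v', v⟫] = 0`, stated through a lower bound `φ` of the integrand so
that the integrand itself need not be integrable. -/
theorem integral_le_zero_of_le_norm_sq_deriv_add_inner {a b : ℝ} (hab : a ≤ b)
    {v v' v'' : ℝ → E} {φ : ℝ → ℝ}
    (hv : ∀ x ∈ Icc a b, HasDerivAt v (v' x) x) (hv' : ∀ x ∈ Icc a b, HasDerivAt v' (v'' x) x)
    (hva : v a = 0) (hvb : v b = 0) (hφ : IntegrableOn φ (Icc a b))
    (hle : ∀ x ∈ Ioo a b, φ x ≤ ‖v' x‖ ^ 2 + inner ℝ (v'' x) (v x)) :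
    ∫ x in a..b, φ x ≤ 0 := by
  have hG : ∀ x ∈ Icc a b,
      HasDerivAt (fun x => inner ℝ (v' x) (v x)) (‖v' x‖ ^ 2 + inner ℝ (v'' x) (v x)) x := by
    intro x hx
    simpa only [real_inner_self_eq_norm_sq] using (hv' x hx).inner ℝ (hv x hx)
  have hftc := intervalIntegral.integral_le_sub_of_hasDeriv_right_of_le hab
    (fun x hx => (hG x hx).continuousAt.continuousWithinAt)
    (fun x hx => (hG x (Ioo_subset_Icc_self hx)).hasDerivWithinAt) hφ hle
  simpa [hva, hvb] using hftc

theorem energy_density_lower_bound {Cf Cf' N : ℝ} (hN : Cf + Cf' ^ 2 / 2 ≤ N)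
    {v v' w h : E} (hw : ‖w‖ ≤ Cf * ‖v‖ + Cf' * ‖v'‖) :
    (‖v‖ ^ 2 + ‖v'‖ ^ 2 - ‖h‖ ^ 2) / 2 ≤ ‖v'‖ ^ 2 + inner ℝ (v + N • v + w + h) v := by
  have hwv : -((Cf * ‖v‖ + Cf' * ‖v'‖) * ‖v‖) ≤ inner ℝ w v :=
    (neg_le_neg (mul_le_mul_of_nonneg_right hw (norm_nonneg v))).trans
      (neg_le_of_abs_le (abs_real_inner_le_norm w v))
  have hhv : -(‖h‖ * ‖v‖) ≤ inner ℝ h v := neg_le_of_abs_le (abs_real_inner_le_norm h v)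
  simp only [inner_add_left, real_inner_smul_left, real_inner_self_eq_norm_sq]
  nlinarith [sq_nonneg (Cf' * ‖v‖ - ‖v'‖), sq_nonneg (‖h‖ - ‖v‖),
    mul_nonneg (sub_nonneg.2 hN) (sq_nonneg ‖v‖)]

end Energy

/-- If `u₁, u₂ ∈ H² ∩ H¹₀` solve `∂²ₓuᵢ − uᵢ − Nuᵢ − f(uᵢ, ∂ₓuᵢ) = hᵢ` with
`N > C_f + (C'_f)²/2 + 1/2` (where `|∂_u f| ≤ C_f` and `|∂_{∂ₓu} f| ≤ C'_f`), then
`‖u₁ − u₂‖²_{H¹} ≤ ‖h₁ − h₂‖²_{L²}`. -/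
theorem bvp_solution_operator_lipschitz (m : ℕ) (L Cf Cf' N : ℝ) (hL : 0 < L)
    (f : Vec m → Vec m → Vec m) (hf : ContDiff ℝ 1 (Function.uncurry f))
    (hfu : ∀ y z, ‖fderiv ℝ (fun w => f w z) y‖ ≤ Cf)
    (hfz : ∀ y z, ‖fderiv ℝ (fun w => f y w) z‖ ≤ Cf')
    (hN : N > Cf + Cf' ^ 2 / 2 + 1 / 2)
    (u₁ u₁' u₁'' u₂ u₂' u₂'' h₁ h₂ : ℝ → Vec m)
    (hu₁ : ∀ x ∈ Icc 0 L, HasDerivAt u₁ (u₁' x) x)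
    (hu₁' : ∀ x ∈ Icc 0 L, HasDerivAt u₁' (u₁'' x) x)
    (hu₂ : ∀ x ∈ Icc 0 L, HasDerivAt u₂ (u₂' x) x)
    (hu₂' : ∀ x ∈ Icc 0 L, HasDerivAt u₂' (u₂'' x) x)
    (hbc₁ : u₁ 0 = 0 ∧ u₁ L = 0) (hbc₂ : u₂ 0 = 0 ∧ u₂ L = 0)
    (heq₁ : ∀ x ∈ Icc 0 L, u₁'' x - u₁ x - N • u₁ x - f (u₁ x) (u₁' x) = h₁ x)
    (heq₂ : ∀ x ∈ Icc 0 L, u₂'' x - u₂ x - N • u₂ x - f (u₂ x) (u₂' x) = h₂ x)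
    (hint : IntervalIntegrable (fun x => ‖h₁ x - h₂ x‖ ^ 2) volume 0 L) :
    (∫ x in (0:ℝ)..L, ‖u₁ x - u₂ x‖ ^ 2 + ‖u₁' x - u₂' x‖ ^ 2) ≤
      ∫ x in (0:ℝ)..L, ‖h₁ x - h₂ x‖ ^ 2 := by
  set v : ℝ → Vec m := fun x => u₁ x - u₂ x
  set v' : ℝ → Vec m := fun x => u₁' x - u₂' x
  have hv : ∀ x ∈ Icc 0 L, HasDerivAt v (v' x) x := fun x hx => (hu₁ x hx).sub (hu₂ x hx)
  have hv' : ∀ x ∈ Icc 0 L, HasDerivAt v' (u₁'' x - u₂'' x) x :=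
    fun x hx => (hu₁' x hx).sub (hu₂' x hx)
  have hv_eq : ∀ x ∈ Icc 0 L, u₁'' x - u₂'' x =
      v x + N • v x + (f (u₁ x) (u₁' x) - f (u₂ x) (u₂' x)) + (h₁ x - h₂ x) := by
    intro x hx
    rw [← heq₁ x hx, ← heq₂ x hx]
    simp only [v, smul_sub]
    abel
  have henergy_int : IntervalIntegrable (fun x => ‖v x‖ ^ 2 + ‖v' x‖ ^ 2) volume 0 L := by
    refine ContinuousOn.intervalIntegrable ?_
    rw [uIcc_of_le hL.le]
    exact (ContinuousOn.norm (fun x hx => (hv x hx).continuousAt.continuousWithinAt)).pow 2 |>.add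
      ((ContinuousOn.norm (fun x hx => (hv' x hx).continuousAt.continuousWithinAt)).pow 2)
  have hbound := integral_le_zero_of_le_norm_sq_deriv_add_inner hL.le hv hv'
    (by simp [v, hbc₁.1, hbc₂.1]) (by simp [v, hbc₁.2, hbc₂.2])
    (φ := fun x => (‖v x‖ ^ 2 + ‖v' x‖ ^ 2 - ‖h₁ x - h₂ x‖ ^ 2) / 2)
    ((intervalIntegrable_iff_integrableOn_Icc_of_le hL.le).1 ((henergy_int.sub hint).div_const 2))
    fun x hx => by
      rw [hv_eq x (Ioo_subset_Icc_self hx)]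
      exact energy_density_lower_bound (by linarith)
        (norm_sub_le_of_norm_fderiv_partial_le (hf.differentiable one_ne_zero) hfu hfz _ _ _ _)
  rw [intervalIntegral.integral_div, intervalIntegral.integral_sub henergy_int hint] at hbound
  linarith
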